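/- Let C be a nonempty (n,d,w) constant-weight code with d even and d < 2w ≤ n, and let H = {d/2, …, w}. Suppose i ≠ j are in H with m_{i,j} < d, and let P_i, P_j be integers with P_i ≥ T(i,w,i,n−w,d) and P_j ≥ T(j,w,j,n−w,d). Then for each c ∈ C, |S_{2i}(c)|/P_i + |S_{2j}(c)|/P_j ≤ 1. -/

import Mathlib

/-- The number of ones of a binary vector. -/
def wtOnes {n : ℕ} (u : Fin n → ZMod 2) : ℕ :=
  (Finset.univ.filter (fun t => u t = 1)).card

/-- `C` is an `(n,d,w)` constant-weight binary code. -/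
def IsCWCode (n d w : ℕ) (C : Finset (Fin n → ZMod 2)) : Prop :=
  (∀ c ∈ C, wtOnes c = w) ∧
  ∀ u ∈ C, ∀ v ∈ C, u ≠ v → d ≤ hammingDist u v

/-- `A n d w`: the largest possible size of an `(n,d,w)` constant-weight code. -/
noncomputable def A (n d w : ℕ) : ℕ :=
  sSup {M | ∃ C : Finset (Fin n → ZMod 2), IsCWCode n d w C ∧ C.card = M}

/-- `C` is a `(w1,n1,w2,n2,d)` doubly-constant-weight binary code. -/
def IsDCWCode (w1 n1 w2 n2 d : ℕ) (C : Finset (Fin n1 ⊕ Fin n2 → ZMod 2)) : Prop :=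
  (∀ c ∈ C,
    (Finset.univ.filter (fun t : Fin n1 => c (Sum.inl t) = 1)).card = w1 ∧
    (Finset.univ.filter (fun t : Fin n2 => c (Sum.inr t) = 1)).card = w2) ∧
  ∀ u ∈ C, ∀ v ∈ C, u ≠ v → d ≤ hammingDist u v

/-- `T w1 n1 w2 n2 d`: the largest possible size of a `(w1,n1,w2,n2,d)`
doubly-constant-weight code. -/
noncomputable def T (w1 n1 w2 n2 d : ℕ) : ℕ :=
  sSup {M | ∃ C : Finset (Fin n1 ⊕ Fin n2 → ZMod 2), IsDCWCode w1 n1 w2 n2 d C ∧ C.card = M}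

/-- `S_i(c)`: the set of codewords of `C` at distance `i` from `c`. -/
def Sdist {n : ℕ} (C : Finset (Fin n → ZMod 2)) (c : Fin n → ZMod 2) (i : ℕ) :
    Finset (Fin n → ZMod 2) :=
  C.filter (fun u => hammingDist u c = i)

/-- The distance distribution `A_i = (1/|C|) ∑_{c ∈ C} |S_i(c)|` of a code `C`. -/
noncomputable def distDistr {n : ℕ} (C : Finset (Fin n → ZMod 2)) (i : ℕ) : ℚ :=
  (∑ c ∈ C, ((Sdist C c i).card : ℚ)) / (C.card : ℚ)

/-- `V_i`: vectors of `F^n` with exactly `i` ones on the first `w` coordinates and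
exactly `i` ones on the last `n - w` coordinates. -/
def Vset (n w i : ℕ) : Finset (Fin n → ZMod 2) :=
  Finset.univ.filter (fun u =>
    (Finset.univ.filter (fun t : Fin n => t.val < w ∧ u t = 1)).card = i ∧
    (Finset.univ.filter (fun t : Fin n => w ≤ t.val ∧ u t = 1)).card = i)

/-- `m_{i,j} = max { d(u,v) : u ∈ V_i, v ∈ V_j }`. -/
def mMax (n w i j : ℕ) : ℕ :=
  ((Vset n w i) ×ˢ (Vset n w j)).sup fun p => hammingDist p.1 p.2

/-- `P⁻_k(n;x) = ∑_{j odd} C(x,j) C(n-x,k-j)`. -/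
def Pminus (k n x : ℕ) : ℕ :=
  ∑ j ∈ Finset.range (k + 1), if Odd j then x.choose j * (n - x).choose (k - j) else 0

/-- `P⁺_k(n;x) = ∑_{j even} C(x,j) C(n-x,k-j)`. -/
def Pplus (k n x : ℕ) : ℕ :=
  ∑ j ∈ Finset.range (k + 1), if Even j then x.choose j * (n - x).choose (k - j) else 0

/-- The Krawtchouk polynomial `P_k(n;x) = ∑_j (-1)^j C(x,j) C(n-x,k-j)` at integer points. -/
def Kraw (k n x : ℕ) : ℤ :=
  ∑ j ∈ Finset.range (k + 1), (-1 : ℤ) ^ j * x.choose j * (n - x).choose (k - j)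

/-!
If `u ∈ S_{2i}(c)`, then `u` and `c` both have weight `w`, so `u` differs from `c` in exactly `i`
ones and `i` zeros of `c`. Translating by `c` and permuting the coordinates so that the support of
`c` comes first is an isometry carrying `S_{2i}(c)` into `V_i`, and `V_i` is the set of
`(i,w,i,n-w)` doubly-constant-weight words; hence `|S_{2i}(c)| ≤ T(i,w,i,n-w,d) ≤ P_i`.
If both `S_{2i}(c)` and `S_{2j}(c)` were nonempty, a codeword from each would give two distinct
codewords (their distances to `c` differ) at distance at most `m_{i,j} < d`. So one of the two
fractions vanishes and the other is at most `1`.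
-/

open Finset

section Hamming

variable {ι : Type*} [Fintype ι]

theorem hammingDist_comp_equiv {κ β : Type*} [Fintype κ] [DecidableEq κ] [DecidableEq β]
    (e : κ ≃ ι) (x y : ι → β) : hammingDist (x ∘ e) (y ∘ e) = hammingDist x y :=
  card_equiv e (by simp)

theorem hammingDist_add_right {β : Type*} [AddGroup β] [DecidableEq β] (x y z : ι → β) :
    hammingDist (x + z) (y + z) = hammingDist x y :=
  hammingDist_comp (fun t a => a + z t) fun t => add_left_injective (z t)

end Hamming

theorem ZMod.add_eq_one_iff_ne {a b : ZMod 2} : a + b = 1 ↔ a ≠ b := by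
  revert a b; decide

theorem card_filter_comp_perm {α : Type*} [Fintype α] (σ : Equiv.Perm α) (p : α → Prop)
    [DecidablePred p] : #{t | p (σ t)} = #{t | p t} :=
  card_equiv σ (by simp)

theorem card_ne_on_support_eq_half {n k : ℕ} {u c : Fin n → ZMod 2}
    (hw : wtOnes u = wtOnes c) (hd : hammingDist u c = 2 * k) :
    #{t | c t = 1 ∧ u t ≠ c t} = k ∧ #{t | c t ≠ 1 ∧ u t ≠ c t} = k := by
  have hweight :
      wtOnes u + #{t | c t = 1 ∧ u t ≠ c t} = wtOnes c + #{t | c t ≠ 1 ∧ u t ≠ c t} := by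
    simp only [wtOnes, card_filter, ← sum_add_distrib]
    refine sum_congr rfl fun t _ => ?_
    generalize u t = a; generalize c t = b; revert a b; decide
  have hdist :
      hammingDist u c = #{t | c t = 1 ∧ u t ≠ c t} + #{t | c t ≠ 1 ∧ u t ≠ c t} := by
    simp only [hammingDist, card_filter, ← sum_add_distrib]
    refine sum_congr rfl fun t _ => ?_
    generalize u t = a; generalize c t = b; revert a b; decide
  omega

theorem wtOnes_le {n : ℕ} (c : Fin n → ZMod 2) : wtOnes c ≤ n :=
  (card_le_univ _).trans_eq (Fintype.card_fin n)

theorem exists_perm_one_iff_lt {n w : ℕ} {c : Fin n → ZMod 2} (hc : wtOnes c = w) :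
    ∃ σ : Equiv.Perm (Fin n), ∀ t, c (σ t) = 1 ↔ t.val < w := by
  have hwn : w ≤ n := hc ▸ wtOnes_le c
  have hcard : Fintype.card {t : Fin n // t.val < w} = Fintype.card {t // c t = 1} := by
    rw [Fintype.card_fin_lt_of_le hwn, Fintype.card_subtype, ← hc, wtOnes]
  set e := Fintype.equivOfCardEq hcard
  refine ⟨e.extendSubtype, fun t => ?_⟩
  by_cases ht : t.val < w
  · simpa [ht] using e.extendSubtype_mem t ht
  · simpa [ht] using e.extendSubtype_not_mem t ht

theorem comp_perm_add_mem_Vset {n w k : ℕ} {σ : Equiv.Perm (Fin n)} {u c : Fin n → ZMod 2}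
    (hσ : ∀ t, c (σ t) = 1 ↔ t.val < w) (hw : wtOnes u = wtOnes c)
    (hd : hammingDist u c = 2 * k) : (u + c) ∘ σ ∈ Vset n w k := by
  obtain ⟨h₁, h₂⟩ := card_ne_on_support_eq_half hw hd
  simp only [Vset, mem_filter, mem_univ, true_and, Function.comp_apply, Pi.add_apply,
    ZMod.add_eq_one_iff_ne]
  constructor
  · rw [← h₁, ← card_filter_comp_perm σ fun t => c t = 1 ∧ u t ≠ c t]
    simp only [hσ]
  · rw [← h₂, ← card_filter_comp_perm σ fun t => c t ≠ 1 ∧ u t ≠ c t]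
    simp only [hσ, ne_eq, not_lt]

theorem card_le_T_of_IsDCWCode {w₁ n₁ w₂ n₂ d : ℕ} {D : Finset (Fin n₁ ⊕ Fin n₂ → ZMod 2)}
    (hD : IsDCWCode w₁ n₁ w₂ n₂ d D) : #D ≤ T w₁ n₁ w₂ n₂ d :=
  le_csSup ⟨_, fun _ ⟨D', _, hM⟩ => hM ▸ card_le_univ D'⟩ ⟨D, hD, rfl⟩

section Blocks

variable {n w : ℕ} (hwn : w ≤ n)

def blockEquiv : Fin w ⊕ Fin (n - w) ≃ Fin n :=
  finSumFinEquiv.trans (finCongr (Nat.add_sub_cancel' hwn))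

theorem card_filter_blockEquiv_inl (p : Fin n → Prop) [DecidablePred p] :
    #{a : Fin w | p (blockEquiv hwn (.inl a))} = #{t : Fin n | t.val < w ∧ p t} := by
  apply card_nbij (fun a => blockEquiv hwn (.inl a))
  · intro a ha
    simp_all [blockEquiv]
  · intro a _ b _ hab
    simpa using hab
  · intro t ht
    simp only [coe_filter, mem_univ, true_and, Set.mem_ofPred_eq] at ht
    exact ⟨⟨t, ht.1⟩, by simpa [blockEquiv] using ht.2, by ext; simp [blockEquiv]⟩

theorem card_filter_blockEquiv_inr (p : Fin n → Prop) [DecidablePred p] :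
    #{b : Fin (n - w) | p (blockEquiv hwn (.inr b))} = #{t : Fin n | w ≤ t.val ∧ p t} := by
  apply card_nbij (fun b => blockEquiv hwn (.inr b))
  · intro a ha
    simp_all [blockEquiv]
  · intro a _ b _ hab
    simpa using hab
  · intro t ht
    simp only [coe_filter, mem_univ, true_and, Set.mem_ofPred_eq] at ht
    refine ⟨⟨t - w, by omega⟩, by simpa [blockEquiv, Nat.add_sub_cancel' ht.1] using ht.2, ?_⟩
    ext; simp [blockEquiv]; omega

end Blocks

theorem card_le_T_of_forall_mem_Vset {n w k d : ℕ} (hwn : w ≤ n) {D : Finset (Fin n → ZMod 2)}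
    (hV : ∀ x ∈ D, x ∈ Vset n w k) (hD : ∀ x ∈ D, ∀ y ∈ D, x ≠ y → d ≤ hammingDist x y) :
    #D ≤ T k w k (n - w) d := by
  have hinj : Function.Injective fun x : Fin n → ZMod 2 => x ∘ blockEquiv hwn :=
    (blockEquiv hwn).surjective.injective_comp_right
  rw [← card_image_of_injective D hinj]
  refine card_le_T_of_IsDCWCode ⟨?_, ?_⟩ <;> simp only [forall_mem_image]
  · intro x hx
    obtain ⟨h₁, h₂⟩ := (mem_filter.1 (hV x hx)).2
    exact ⟨(card_filter_blockEquiv_inl hwn _).trans h₁,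
      (card_filter_blockEquiv_inr hwn _).trans h₂⟩
  · intro x hx y hy hxy
    rw [hammingDist_comp_equiv]
    exact hD x hx y hy (ne_of_apply_ne (· ∘ blockEquiv hwn) hxy)

theorem hammingDist_le_mMax {n w i j : ℕ} {x y : Fin n → ZMod 2} (hx : x ∈ Vset n w i)
    (hy : y ∈ Vset n w j) : hammingDist x y ≤ mMax n w i j :=
  le_sup (f := fun p => hammingDist p.1 p.2) (mk_mem_product hx hy)

section Code

variable {n d w : ℕ} {C : Finset (Fin n → ZMod 2)} {c : Fin n → ZMod 2}

theorem comp_perm_add_mem_Vset_of_mem_Sdist (hcode : IsCWCode n d w C) (hc : c ∈ C)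
    {σ : Equiv.Perm (Fin n)} (hσ : ∀ t, c (σ t) = 1 ↔ t.val < w) {k : ℕ} {u : Fin n → ZMod 2}
    (hu : u ∈ Sdist C c (2 * k)) : (u + c) ∘ σ ∈ Vset n w k := by
  obtain ⟨huC, hd⟩ := mem_filter.1 hu
  exact comp_perm_add_mem_Vset hσ ((hcode.1 u huC).trans (hcode.1 c hc).symm) hd

theorem card_Sdist_le_T (hcode : IsCWCode n d w C) (hc : c ∈ C) (k : ℕ) :
    #(Sdist C c (2 * k)) ≤ T k w k (n - w) d := by
  obtain ⟨σ, hσ⟩ := exists_perm_one_iff_lt (hcode.1 c hc)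
  have hinj : Function.Injective fun u : Fin n → ZMod 2 => (u + c) ∘ σ :=
    σ.surjective.injective_comp_right.comp (add_left_injective c)
  rw [← card_image_of_injective _ hinj]
  refine card_le_T_of_forall_mem_Vset ((hcode.1 c hc).symm.trans_le (wtOnes_le c)) ?_ ?_ <;>
    simp only [forall_mem_image]
  · exact fun u hu => comp_perm_add_mem_Vset_of_mem_Sdist hcode hc hσ hu
  · intro u hu v hv huv
    rw [hammingDist_comp_equiv, hammingDist_add_right]
    exact hcode.2 u (mem_filter.1 hu).1 v (mem_filter.1 hv).1
      (ne_of_apply_ne (fun u => (u + c) ∘ σ) huv)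

theorem Sdist_eq_empty_or_Sdist_eq_empty (hcode : IsCWCode n d w C) (hc : c ∈ C) {i j : ℕ}
    (hij : i ≠ j) (hm : mMax n w i j < d) :
    Sdist C c (2 * i) = ∅ ∨ Sdist C c (2 * j) = ∅ := by
  obtain ⟨σ, hσ⟩ := exists_perm_one_iff_lt (hcode.1 c hc)
  simp only [← not_nonempty_iff_eq_empty, ← not_and_or]
  rintro ⟨⟨u, hu⟩, ⟨v, hv⟩⟩
  have huv : u ≠ v := by
    rintro rfl
    have := (mem_filter.1 hu).2.symm.trans (mem_filter.1 hv).2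
    omega
  have hdist : hammingDist u v ≤ mMax n w i j := by
    rw [← hammingDist_add_right u v c, ← hammingDist_comp_equiv σ]
    exact hammingDist_le_mMax (comp_perm_add_mem_Vset_of_mem_Sdist hcode hc hσ hu)
      (comp_perm_add_mem_Vset_of_mem_Sdist hcode hc hσ hv)
  have := hcode.2 u (mem_filter.1 hu).1 v (mem_filter.1 hv).1 huv
  omega

end Code

theorem Sdist_pair_bound_general (n d w i j : ℕ) (C : Finset (Fin n → ZMod 2))
    (hcode : IsCWCode n d w C) (hij : i ≠ j)
    (hm : mMax n w i j < d)
    (Pi Pj : ℤ) (hPi : (T i w i (n - w) d : ℤ) ≤ Pi) (hPj : (T j w j (n - w) d : ℤ) ≤ Pj)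
    (c : Fin n → ZMod 2) (hc : c ∈ C) :
    ((Sdist C c (2 * i)).card : ℚ) / (Pi : ℚ) +
      ((Sdist C c (2 * j)).card : ℚ) / (Pj : ℚ) ≤ 1 := by
  have hbound (k : ℕ) (P : ℤ) (hP : (T k w k (n - w) d : ℤ) ≤ P) :
      (#(Sdist C c (2 * k)) : ℚ) / P ≤ 1 := by
    have hcard : (#(Sdist C c (2 * k)) : ℤ) ≤ P :=
      (Nat.cast_le.2 (card_Sdist_le_T hcode hc k)).trans hP
    exact div_le_one_of_le₀ (by exact_mod_cast hcard)
      (by exact_mod_cast (Int.natCast_nonneg _).trans hcard)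
  rcases Sdist_eq_empty_or_Sdist_eq_empty hcode hc hij hm with h | h
  · simpa [h] using hbound j Pj hPj
  · simpa [h] using hbound i Pi hPi

/-- For a nonempty `(n,d,w)` constant-weight code `C` (`d` even,
`d < 2w ≤ n`), `i ≠ j` in `H` with `m_{i,j} < d`, and integers
`P_i ≥ T(i,w,i,n-w,d)`, `P_j ≥ T(j,w,j,n-w,d)`, every `c ∈ C` satisfies
`|S_{2i}(c)|/P_i + |S_{2j}(c)|/P_j ≤ 1`. -/
theorem Sdist_pair_bound (n d w i j : ℕ) (C : Finset (Fin n → ZMod 2)) (hC : C.Nonempty)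
    (hcode : IsCWCode n d w C) (hd : Even d) (hdw : d < 2 * w) (hwn : 2 * w ≤ n)
    (hi : i ∈ Finset.Icc (d / 2) w) (hj : j ∈ Finset.Icc (d / 2) w) (hij : i ≠ j)
    (hm : mMax n w i j < d)
    (Pi Pj : ℤ) (hPi : (T i w i (n - w) d : ℤ) ≤ Pi) (hPj : (T j w j (n - w) d : ℤ) ≤ Pj)
    (c : Fin n → ZMod 2) (hc : c ∈ C) :
    ((Sdist C c (2 * i)).card : ℚ) / (Pi : ℚ) +
      ((Sdist C c (2 * j)).card : ℚ) / (Pj : ℚ) ≤ 1 :=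
  Sdist_pair_bound_general n d w i j C hcode hij hm Pi Pj hPi hPj c hc
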